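/- arXiv:cs/0506087 — 2 statements merged into one kernel-verified Lean document; each statement's English description precedes it below -/
import Mathlib

section
/- For all integers d ≥ 1 and d^⊥ ≥ 1, N(d, d^⊥) ≥ d + d^⊥ − 2. -/
/-- The dual code of a binary linear code `C ⊆ GF(2)^n`. -/
def dualCode {n : ℕ} (C : Submodule (ZMod 2) (Fin n → ZMod 2)) :
    Submodule (ZMod 2) (Fin n → ZMod 2) where
  carrier := {u | ∀ v ∈ C, dotProduct u v = 0}
  zero_mem' := by intro v _; simp
  add_mem' := by
    intro a b ha hb v hv
    rw [Set.mem_setOf_eq] at *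
    rw [add_dotProduct, ha v hv, hb v hv, add_zero]
  smul_mem' := by
    intro c u hu v hv
    rw [Set.mem_setOf_eq] at *
    rw [smul_dotProduct, hu v hv, smul_zero]

/-- The minimum Hamming distance of the code `C` is at least `d`. -/
def MinDistGE {n : ℕ} (C : Submodule (ZMod 2) (Fin n → ZMod 2)) (d : ℕ) : Prop :=
  ∀ c ∈ C, c ≠ 0 → d ≤ hammingNorm c

/-- `N d d⊥` is the minimum length `n` for which there exists a binary linear code of
length `n` (a subspace `C` of `GF(2)^n` with `0 < dim C < n`) with minimum Hamming
distance at least `d` and dual distance at least `d⊥`. -/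
noncomputable def N (d dp : ℕ) : ℕ :=
  sInf {n | ∃ C : Submodule (ZMod 2) (Fin n → ZMod 2),
    0 < Module.finrank (ZMod 2) C ∧ Module.finrank (ZMod 2) C < n ∧
    MinDistGE C d ∧ MinDistGE (dualCode C) dp}

/-!
Lower bound: if `C ≠ 0` has minimum distance `d`, deleting any `d - 1` coordinates is injective
on `C` (Singleton), so `dim C ≤ n - d + 1`; likewise `dim C⊥ ≤ n - d⊥ + 1`, and
`dim C + dim C⊥ ≥ n` then gives `d + d⊥ ≤ n + 2`.

Since `sInf ∅ = 0`, this only bounds `N d d⊥` once some code with both distances large exists.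
The Reed–Muller codes do: they are built by the Plotkin construction
`{(u, u + v) | u ∈ C₁, v ∈ C₂}`, whose distance is at least `min (2 d(C₁)) d(C₂)` and whose dual
`{(x, y) | y ∈ C₂⊥, x + y ∈ C₁⊥}` is again of this shape.
-/

open Module

@[simp]
theorem Fin.append_zero_zero {α : Type*} [Zero α] {m n : ℕ} :
    Fin.append (0 : Fin m → α) (0 : Fin n → α) = 0 := by
  ext i
  induction i using Fin.addCases <;> simp

theorem dotProduct_append {R : Type*} [AddCommMonoid R] [Mul R] {m n : ℕ}
    (x y : Fin m → R) (u v : Fin n → R) :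
    Fin.append x u ⬝ᵥ Fin.append y v = x ⬝ᵥ y + u ⬝ᵥ v := by
  simp only [dotProduct, Fin.sum_univ_add, Fin.append_left, Fin.append_right]

section Hamming

variable {α : Type*} [DecidableEq α]

theorem hammingNorm_add_le {ι : Type*} [Fintype ι] [AddZeroClass α] (x y : ι → α) :
    hammingNorm (x + y) ≤ hammingNorm x + hammingNorm y := by
  classical
  refine (Finset.card_le_card fun i hi => ?_).trans (Finset.card_union_le _ _)
  simp only [Finset.mem_filter, Finset.mem_univ, true_and, Finset.mem_union, Pi.add_apply]
    at hi ⊢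
  by_contra! h
  simp [h.1, h.2] at hi

theorem hammingNorm_append [Zero α] {m n : ℕ} (x : Fin m → α) (y : Fin n → α) :
    hammingNorm (Fin.append x y) = hammingNorm x + hammingNorm y := by
  simp only [hammingNorm, Finset.card_filter, Fin.sum_univ_add, Fin.append_left, Fin.append_right]

theorem hammingNorm_single [Zero α] [One α] [NeZero (1 : α)] {ι : Type*} [Fintype ι]
    [DecidableEq ι] (i : ι) :
    hammingNorm (Pi.single i 1 : ι → α) = 1 := by
  rw [hammingNorm, Finset.card_eq_one]
  exact ⟨i, by ext j; by_cases h : j = i <;> simp [h]⟩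

theorem hammingNorm_append_self [Zero α] {n : ℕ} (x : Fin n → α) :
    hammingNorm (Fin.append x x) = 2 * hammingNorm x := by
  rw [hammingNorm_append, two_mul]

theorem hammingNorm_add_le_hammingNorm_append [AddZeroClass α] {n : ℕ} (x y : Fin n → α) :
    hammingNorm (x + y) ≤ hammingNorm (Fin.append x y) :=
  (hammingNorm_add_le x y).trans_eq (hammingNorm_append x y).symm

end Hamming

section Codes

variable {n : ℕ} {C : Submodule (ZMod 2) (Fin n → ZMod 2)} {d e : ℕ}

theorem MinDistGE.mono (h : MinDistGE C d) (hed : e ≤ d) : MinDistGE C e :=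
  fun c hc hc0 => hed.trans (h c hc hc0)

theorem minDistGE_one (C : Submodule (ZMod 2) (Fin n → ZMod 2)) : MinDistGE C 1 :=
  fun _ _ hc0 => hammingNorm_pos_iff.2 hc0

theorem minDistGE_bot (d : ℕ) : MinDistGE (⊥ : Submodule (ZMod 2) (Fin n → ZMod 2)) d :=
  fun _ hc hc0 => absurd ((Submodule.mem_bot _).1 hc) hc0

theorem MinDistGE.ne_top (h : MinDistGE C 2) (hn : 0 < n) : C ≠ ⊤ := by
  rintro rfl
  have := h (Pi.single ⟨0, hn⟩ 1) Submodule.mem_top (by simp)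
  rw [hammingNorm_single] at this
  omega

@[simp]
theorem dualCode_bot : dualCode (⊥ : Submodule (ZMod 2) (Fin n → ZMod 2)) = ⊤ :=
  eq_top_iff.2 fun u _ v hv => by rw [(Submodule.mem_bot _).1 hv, dotProduct_zero]

@[simp]
theorem dualCode_top : dualCode (⊤ : Submodule (ZMod 2) (Fin n → ZMod 2)) = ⊥ :=
  eq_bot_iff.2 fun u hu => (Submodule.mem_bot _).2 <| funext fun i => by
    simpa using hu (Pi.single i 1) Submodule.mem_top

theorem dualCode_eq_orthogonal (C : Submodule (ZMod 2) (Fin n → ZMod 2)) :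
    dualCode C = LinearMap.BilinForm.orthogonal (dotProductBilin (ZMod 2) (ZMod 2)) C := by
  ext u
  simp [dualCode, LinearMap.BilinForm.mem_orthogonal_iff, dotProduct_comm]

theorem le_finrank_add_finrank_dualCode (C : Submodule (ZMod 2) (Fin n → ZMod 2)) :
    n ≤ finrank (ZMod 2) C + finrank (ZMod 2) (dualCode C) := by
  have := LinearMap.BilinForm.finrank_add_finrank_orthogonal'
    (B := dotProductBilin (ZMod 2) (ZMod 2)) C
  rw [← dualCode_eq_orthogonal, finrank_fin_fun] at this
  omega

theorem MinDistGE.finrank_add_le (h : MinDistGE C d) (hC : C ≠ ⊥) :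
    finrank (ZMod 2) C + d ≤ n + 1 := by
  classical
  obtain ⟨c, hc, hc0⟩ := Submodule.exists_mem_ne_zero_of_ne_bot hC
  have hdn : d ≤ n :=
    (h c hc hc0).trans (hammingNorm_le_card_fintype.trans_eq (Fintype.card_fin n))
  obtain ⟨s, -, hs⟩ := (Finset.univ : Finset (Fin n)).exists_subset_card_eq (n := d - 1)
    (by simp only [Finset.card_univ, Fintype.card_fin]; omega)
  have hinj : Function.Injective
      (LinearMap.funLeft (ZMod 2) (ZMod 2) (Subtype.val : ↥sᶜ → Fin n) ∘ₗ C.subtype) := by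
    rw [← LinearMap.ker_eq_bot, LinearMap.ker_eq_bot']
    rintro ⟨x, hx⟩ hvanish
    rw [Submodule.mk_eq_zero]
    by_contra hx0
    have hsupp : Finset.univ.filter (x · ≠ 0) ⊆ s := fun i hi => by
      by_contra his
      exact (Finset.mem_filter.1 hi).2 (congrFun hvanish ⟨i, Finset.mem_compl.2 his⟩)
    have := h x hx hx0
    have := hammingNorm_pos_iff.2 hx0
    have : hammingNorm x ≤ s.card := Finset.card_le_card hsupp
    omega
  have := LinearMap.finrank_le_finrank_of_injective hinj
  rw [finrank_fintype_fun_eq_card, Fintype.card_coe, Finset.card_compl, Fintype.card_fin, hs]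
    at this
  omega

end Codes

section Plotkin

variable {R : Type*} [Semiring R] {n : ℕ}

def plotkinMap : (Fin n → R) × (Fin n → R) →ₗ[R] (Fin (n + n) → R) where
  toFun p := Fin.append p.1 (p.1 + p.2)
  map_add' p q := by
    ext i
    induction i using Fin.addCases <;>
      simp only [Pi.add_apply, Fin.append_left, Fin.append_right] <;> simp [add_add_add_comm]
  map_smul' r p := by
    ext i
    induction i using Fin.addCases <;>
      simp only [Pi.smul_apply, Fin.append_left, Fin.append_right] <;> simp [mul_add]

def plotkin (C₁ C₂ : Submodule R (Fin n → R)) : Submodule R (Fin (n + n) → R) :=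
  (C₁.prod C₂).map plotkinMap

theorem mem_plotkin {C₁ C₂ : Submodule R (Fin n → R)} {z : Fin (n + n) → R} :
    z ∈ plotkin C₁ C₂ ↔ ∃ u ∈ C₁, ∃ v ∈ C₂, Fin.append u (u + v) = z := by
  simp only [plotkin, Submodule.mem_map, Submodule.mem_prod, Prod.exists, and_assoc,
    exists_and_left]
  rfl

end Plotkin

section PlotkinDistance

variable {n : ℕ} {C₁ C₂ : Submodule (ZMod 2) (Fin n → ZMod 2)} {d₁ d₂ : ℕ}

theorem minDistGE_plotkin (h₁ : MinDistGE C₁ d₁) (h₂ : MinDistGE C₂ d₂) :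
    MinDistGE (plotkin C₁ C₂) (min (2 * d₁) d₂) := by
  intro z hz hz0
  obtain ⟨u, hu, v, hv, rfl⟩ := mem_plotkin.1 hz
  rcases eq_or_ne v 0 with rfl | hv0
  · have hu0 : u ≠ 0 := by rintro rfl; exact hz0 (by simp)
    rw [add_zero, hammingNorm_append_self]
    exact min_le_of_left_le (Nat.mul_le_mul_left 2 (h₁ u hu hu0))
  · calc min (2 * d₁) d₂ ≤ hammingNorm v := min_le_of_right_le (h₂ v hv hv0)
      _ = hammingNorm (u + (u + v)) := by
        congr 1; exact funext fun i => (CharTwo.add_cancel_left (u i) (v i)).symm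
      _ ≤ _ := hammingNorm_add_le_hammingNorm_append u (u + v)

theorem minDistGE_dualCode_plotkin (h₁ : MinDistGE (dualCode C₁) d₁)
    (h₂ : MinDistGE (dualCode C₂) d₂) :
    MinDistGE (dualCode (plotkin C₁ C₂)) (min (2 * d₂) d₁) := by
  intro z hz hz0
  obtain ⟨x, y, rfl⟩ : ∃ x y, Fin.append x y = z := ⟨_, _, Fin.append_castAdd_natAdd⟩
  have horth : ∀ u ∈ C₁, ∀ v ∈ C₂, (x + y) ⬝ᵥ u + y ⬝ᵥ v = 0 := fun u hu v hv => by
    have := hz _ (mem_plotkin.2 ⟨u, hu, v, hv, rfl⟩)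
    rwa [dotProduct_append, dotProduct_add, ← add_assoc, ← add_dotProduct] at this
  have hy : y ∈ dualCode C₂ := fun v hv => by simpa using horth 0 C₁.zero_mem v hv
  have hxy : x + y ∈ dualCode C₁ := fun u hu => by simpa using horth u hu 0 C₂.zero_mem
  rcases eq_or_ne (x + y) 0 with hxy0 | hxy0
  · obtain rfl : x = y := funext fun i => CharTwo.add_eq_zero.1 (congrFun hxy0 i)
    have hx0 : x ≠ 0 := by rintro rfl; exact hz0 (by simp)
    rw [hammingNorm_append_self]
    exact min_le_of_left_le (Nat.mul_le_mul_left 2 (h₂ x hy hx0))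
  · exact min_le_of_right_le ((h₁ _ hxy hxy0).trans (hammingNorm_add_le_hammingNorm_append x y))

end PlotkinDistance

-- The codes constructed are the Reed–Muller codes `RM(b - 1, m)`, through the recursion
-- `RM(r + 1, m + 1) = plotkin RM(r + 1, m) RM(r, m)`.
theorem exists_minDistGE_two_pow :
    ∀ {m a b : ℕ}, a + b ≤ m + 1 → ∃ C : Submodule (ZMod 2) (Fin (2 ^ m) → ZMod 2),
      MinDistGE C (2 ^ a) ∧ MinDistGE (dualCode C) (2 ^ b)
  | _, 0, _, _ => ⟨⊤, minDistGE_one ⊤, by simpa using minDistGE_bot _⟩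
  | _, _ + 1, 0, _ => ⟨⊥, minDistGE_bot _, by simpa using minDistGE_one ⊤⟩
  | 0, _ + 1, _ + 1, h => by omega
  | m + 1, a + 1, b + 1, h => by
    obtain ⟨C₁, h₁, h₁'⟩ := exists_minDistGE_two_pow (m := m) (a := a) (b := b + 1) (by omega)
    obtain ⟨C₂, h₂, h₂'⟩ := exists_minDistGE_two_pow (m := m) (a := a + 1) (b := b) (by omega)
    rw [pow_succ 2 m, mul_two]
    refine ⟨plotkin C₁ C₂, (minDistGE_plotkin h₁ h₂).mono ?_,
      (minDistGE_dualCode_plotkin h₁' h₂').mono ?_⟩ <;> simp [pow_succ, mul_comm]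

theorem exists_nontrivial_minDistGE (d dp : ℕ) :
    ∃ n, ∃ C : Submodule (ZMod 2) (Fin n → ZMod 2),
      0 < finrank (ZMod 2) C ∧ finrank (ZMod 2) C < n ∧
        MinDistGE C d ∧ MinDistGE (dualCode C) dp := by
  obtain ⟨C, hC, hC'⟩ :=
    exists_minDistGE_two_pow (m := d + dp + 1) (a := d + 1) (b := dp + 1) (by omega)
  have hle : ∀ k, 2 ≤ 2 ^ (k + 1) ∧ k ≤ 2 ^ (k + 1) := fun k =>
    ⟨Nat.le_self_pow (by omega) 2,
      Nat.lt_two_pow_self.le.trans (Nat.pow_le_pow_right (by omega) (by omega))⟩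
  have hn : 0 < 2 ^ (d + dp + 1) := by positivity
  refine ⟨_, C, Submodule.one_le_finrank_iff.2 fun hbot => ?_, ?_,
    hC.mono (hle d).2, hC'.mono (hle dp).2⟩
  · exact (hC'.mono (hle dp).1).ne_top hn (by rw [hbot, dualCode_bot])
  · exact (Submodule.finrank_lt ((hC.mono (hle d).1).ne_top hn)).trans_eq (finrank_fin_fun _)

theorem add_le_of_minDistGE {n d dp : ℕ} {C : Submodule (ZMod 2) (Fin n → ZMod 2)}
    (hpos : 0 < finrank (ZMod 2) C) (hlt : finrank (ZMod 2) C < n)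
    (hd : MinDistGE C d) (hdp : MinDistGE (dualCode C) dp) : d + dp ≤ n + 2 := by
  have hdim := le_finrank_add_finrank_dualCode C
  have hC : C ≠ ⊥ := Submodule.one_le_finrank_iff.1 hpos
  have hC' : dualCode C ≠ ⊥ := by
    intro hbot
    rw [hbot, finrank_bot] at hdim
    omega
  have := hd.finrank_add_le hC
  have := hdp.finrank_add_le hC'
  omega

theorem N_ge_singleton_general (d dp : ℕ) :
    N d dp ≥ d + dp - 2 := by
  obtain ⟨C, hpos, hlt, hd, hdp⟩ :=
    Nat.sInf_mem (s := {n | _}) (exists_nontrivial_minDistGE d dp)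
  have := add_le_of_minDistGE hpos hlt hd hdp
  unfold N
  omega

theorem N_ge_singleton (d dp : ℕ) (hd : 1 ≤ d) (hdp : 1 ≤ dp) :
    N d dp ≥ d + dp - 2 :=
  N_ge_singleton_general d dp
end

section
/- N(5, 3) = 11; that is, 11 is the minimum length n for which there exists a binary linear code of length n with minimum Hamming distance at least 5 and dual distance at least 3. The value is attained by the [11,4] code spanned by the rows of the generator matrix G = [[1,0,0,0,0,0,0,1,1,1,1],[0,1,0,0,0,1,1,0,0,1,1],[0,0,1,0,1,0,1,0,1,0,1],[0,0,0,1,1,1,0,1,0,1,0]]. -/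
/-!
If the dual distance is at least 3, the coordinate functionals restricted to `C` are nonzero and
pairwise distinct, so `n + 1 ≤ 2 ^ k`. Together with the Plotkin bound (each coordinate is
nonzero on at most half of the codewords) this forces `k ≥ 4`. For `k ≥ 4` and `n ≤ 10` the
Plotkin bound rules out minimum weight `≥ 6`, so some codeword `x` has weight 5. The residual
code on the zeros of `x` then has dimension `k - 1 ≥ 3`, length `≤ 5` and minimum distance `≥ 3`,
since `wt c + wt (c + x) = wt x + 2 wt (c restricted to the zeros of x)`; this contradicts the
Plotkin bound once more. The `[11, 4]` code of the statement is checked by computation.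
-/

open Finset Module

section Plotkin

variable {F : Type*} [Field F] [Fintype F] [DecidableEq F] {ι : Type*} [Fintype ι]

theorem card_mul_card_coord_ne_zero_le (D : Submodule F (ι → F)) [Fintype D] (j : ι) :
    Fintype.card F * #{c : D | (c : ι → F) j ≠ 0} ≤ (Fintype.card F - 1) * Fintype.card D := by
  set π : D →ₗ[F] F := (LinearMap.proj j).comp D.subtype
  have hsplit : Nat.card (LinearMap.ker π) + #{c : D | π c ≠ 0} = Fintype.card D := by
    have : Nat.card (LinearMap.ker π) = #{c : D | π c = 0} := by
      rw [← Fintype.card_subtype, ← Nat.card_eq_fintype_card]; rfl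
    rw [this, ← card_univ]
    exact card_filter_add_card_filter_not _
  have hrank : finrank F D ≤ finrank F (LinearMap.ker π) + 1 := by
    have hrange : finrank F (LinearMap.range π) ≤ 1 :=
      (Submodule.finrank_le _).trans (finrank_self F).le
    have := π.finrank_range_add_finrank_ker
    omega
  have hker : Fintype.card D ≤ Fintype.card F * Nat.card (LinearMap.ker π) := by
    rw [card_eq_pow_finrank (K := F) (V := D), natCard_eq_pow_finrank (K := F),
      Nat.card_eq_fintype_card, ← pow_succ']
    exact Nat.pow_le_pow_right Fintype.card_pos hrank
  rw [Nat.sub_one_mul, Nat.le_sub_iff_add_le (Nat.le_mul_of_pos_left _ Fintype.card_pos)]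
  calc Fintype.card F * #{c : D | π c ≠ 0} + Fintype.card D
      ≤ Fintype.card F * #{c : D | π c ≠ 0} + Fintype.card F * Nat.card (LinearMap.ker π) :=
        Nat.add_le_add_left hker _
    _ = Fintype.card F * Fintype.card D := by rw [← mul_add, add_comm, hsplit]

omit [Fintype F] in
theorem sum_hammingNorm_eq_sum_card_coord_ne_zero (D : Submodule F (ι → F)) [Fintype D] :
    ∑ c : D, hammingNorm (c : ι → F) = ∑ j, #{c : D | (c : ι → F) j ≠ 0} := by
  simp only [hammingNorm, card_filter]
  exact sum_comm

theorem card_mul_sum_hammingNorm_le (D : Submodule F (ι → F)) [Fintype D] :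
    Fintype.card F * ∑ c : D, hammingNorm (c : ι → F)
      ≤ (Fintype.card F - 1) * Fintype.card ι * Fintype.card D := by
  calc Fintype.card F * ∑ c : D, hammingNorm (c : ι → F)
      = ∑ j, Fintype.card F * #{c : D | (c : ι → F) j ≠ 0} := by
        rw [sum_hammingNorm_eq_sum_card_coord_ne_zero, mul_sum]
    _ ≤ ∑ _j : ι, (Fintype.card F - 1) * Fintype.card D :=
        sum_le_sum fun j _ => card_mul_card_coord_ne_zero_le D j
    _ = (Fintype.card F - 1) * Fintype.card ι * Fintype.card D := by
        rw [sum_const, card_univ, smul_eq_mul]; ring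

omit [Fintype F] in
theorem mul_card_sub_one_le_sum_hammingNorm (D : Submodule F (ι → F)) [Fintype D]
    {d : ℕ} (hd : ∀ c ∈ D, c ≠ 0 → d ≤ hammingNorm c) :
    d * (Fintype.card D - 1) ≤ ∑ c : D, hammingNorm (c : ι → F) := by
  classical
  calc d * (Fintype.card D - 1) = #((univ : Finset D).erase 0) • d := by
        rw [card_erase_of_mem (mem_univ _), card_univ, smul_eq_mul, mul_comm]
    _ ≤ ∑ c ∈ (univ : Finset D).erase 0, hammingNorm (c : ι → F) :=
        card_nsmul_le_sum _ _ _ fun c hc =>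
          hd c c.2 (Submodule.coe_eq_zero.not.mpr (ne_of_mem_erase hc))
    _ ≤ ∑ c : D, hammingNorm (c : ι → F) := sum_le_sum_of_subset (erase_subset _ _)

theorem plotkin_bound [DecidableEq ι] (D : Submodule F (ι → F)) {d : ℕ}
    (hd : ∀ c ∈ D, c ≠ 0 → d ≤ hammingNorm c) :
    Fintype.card F * d * (Fintype.card F ^ finrank F D - 1)
      ≤ (Fintype.card F - 1) * Fintype.card ι * Fintype.card F ^ finrank F D := by
  classical
  rw [← card_eq_pow_finrank (V := D), mul_assoc]
  exact (Nat.mul_le_mul_left _ (mul_card_sub_one_le_sum_hammingNorm D hd)).trans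
    (card_mul_sum_hammingNorm_le D)

end Plotkin

theorem card_add_one_le_pow_finrank {F : Type*} [Field F] [Finite F] {ι : Type*} [Fintype ι]
    (C : Submodule F (ι → F)) (hne : ∀ j, ∃ c ∈ C, c j ≠ 0)
    (hsep : ∀ j₁ j₂, j₁ ≠ j₂ → ∃ c ∈ C, c j₁ ≠ c j₂) :
    Fintype.card ι + 1 ≤ Nat.card F ^ finrank F C := by
  let π : Option ι → Dual F C := fun o => o.elim 0 fun j => (LinearMap.proj j).comp C.subtype
  have hπ : Function.Injective π := by
    rintro (_ | j₁) (_ | j₂) h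
    · rfl
    · obtain ⟨c, hc, hcj⟩ := hne j₂
      exact absurd (LinearMap.congr_fun h ⟨c, hc⟩).symm hcj
    · obtain ⟨c, hc, hcj⟩ := hne j₁
      exact absurd (LinearMap.congr_fun h ⟨c, hc⟩) hcj
    · by_contra hj
      obtain ⟨c, hc, hcj⟩ := hsep j₁ j₂ (fun h' => hj (congrArg some h'))
      exact hcj (LinearMap.congr_fun h ⟨c, hc⟩)
  have : Finite (Dual F C) := Module.finite_of_finite F
  have := Nat.card_le_card_of_injective π hπ
  rwa [Nat.card_eq_fintype_card, Fintype.card_option, natCard_eq_pow_finrank (K := F),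
    Subspace.dual_finrank_eq] at this

section DualDistance

theorem dotProduct_eq_sum_filter_ne_zero {ι : Type*} [Fintype ι] (u c : ι → ZMod 2) :
    u ⬝ᵥ c = ∑ j with u j ≠ 0, c j := by
  rw [sum_filter]
  refine sum_congr rfl fun j _ => ?_
  rcases (by decide : ∀ a : ZMod 2, a = 0 ∨ a = 1) (u j) with h | h <;> simp [h]

theorem minDistGE_dualCode_iff {n : ℕ} (C : Submodule (ZMod 2) (Fin n → ZMod 2)) (d : ℕ) :
    MinDistGE (dualCode C) d ↔
      ∀ s : Finset (Fin n), s.Nonempty → #s < d → ∃ c ∈ C, ∑ j ∈ s, c j ≠ 0 := by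
  constructor
  · intro h s hs hsd
    by_contra! hall
    set u : Fin n → ZMod 2 := fun j => if j ∈ s then 1 else 0
    have hsupp : ({j | u j ≠ 0} : Finset (Fin n)) = s := by ext j; by_cases j ∈ s <;> simp [u, *]
    have hu : u ∈ dualCode C := fun c hc => by
      rw [dotProduct_eq_sum_filter_ne_zero, hsupp]; exact hall c hc
    have hu0 : u ≠ 0 := by
      obtain ⟨j, hj⟩ := hs
      exact fun h0 => by simpa [u, hj] using congrFun h0 j
    have := h u hu hu0
    rw [hammingNorm, hsupp] at this
    omega
  · intro h u hu hu0
    by_contra! hlt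
    have hs : ({j | u j ≠ 0} : Finset (Fin n)).Nonempty := by
      rw [← card_pos]; exact hammingNorm_pos_iff.mpr hu0
    obtain ⟨c, hc, hne⟩ := h _ hs hlt
    exact hne (by rw [← dotProduct_eq_sum_filter_ne_zero]; exact hu c hc)

theorem minDistGE_dualCode_three_iff {n : ℕ} (C : Submodule (ZMod 2) (Fin n → ZMod 2)) :
    MinDistGE (dualCode C) 3 ↔
      (∀ j, ∃ c ∈ C, c j ≠ 0) ∧ ∀ j₁ j₂, j₁ ≠ j₂ → ∃ c ∈ C, c j₁ ≠ c j₂ := by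
  rw [minDistGE_dualCode_iff]
  constructor
  · intro h
    refine ⟨fun j => by simpa using h {j} (singleton_nonempty j) (by simp), fun j₁ j₂ hj => ?_⟩
    obtain ⟨c, hc, hne⟩ := h {j₁, j₂} (insert_nonempty _ _) (by rw [card_pair hj]; norm_num)
    rw [sum_pair hj] at hne
    exact ⟨c, hc, fun heq => hne (CharTwo.add_eq_zero.mpr heq)⟩
  · rintro ⟨hne, hsep⟩ s hs hsd
    have hcard : #s = 1 ∨ #s = 2 := by have := hs.card_pos; omega
    rcases hcard with hcard | hcard
    · obtain ⟨j, rfl⟩ := card_eq_one.mp hcard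
      simpa using hne j
    · obtain ⟨j₁, j₂, hj, rfl⟩ := card_eq_two.mp hcard
      obtain ⟨c, hc, hcj⟩ := hsep j₁ j₂ hj
      exact ⟨c, hc, by rwa [sum_pair hj, Ne, CharTwo.add_eq_zero]⟩

end DualDistance

section Residual

variable {ι : Type*} [Fintype ι]

def residualCode (C : Submodule (ZMod 2) (ι → ZMod 2)) (x : ι → ZMod 2) :
    Submodule (ZMod 2) ({j // x j = 0} → ZMod 2) :=
  C.map (LinearMap.funLeft (ZMod 2) (ZMod 2) Subtype.val)

omit [Fintype ι] in
theorem mem_residualCode {C : Submodule (ZMod 2) (ι → ZMod 2)} {x : ι → ZMod 2}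
    {y : {j // x j = 0} → ZMod 2} :
    y ∈ residualCode C x ↔ ∃ c ∈ C, (fun j : {j // x j = 0} => c j) = y :=
  Iff.rfl

theorem card_zeros_add_hammingNorm (x : ι → ZMod 2) :
    Fintype.card {j // x j = 0} + hammingNorm x = Fintype.card ι := by
  rw [Fintype.card_subtype, hammingNorm, ← card_univ]
  exact card_filter_add_card_filter_not _

theorem hammingNorm_add_hammingNorm_add (c x : ι → ZMod 2) :
    hammingNorm c + hammingNorm (c + x)
      = hammingNorm x + 2 * hammingNorm (fun j : {j // x j = 0} => c j) := by
  have hpoint : ∀ a b : ZMod 2, ((if a ≠ 0 then 1 else 0) + (if a + b ≠ 0 then 1 else 0) : ℕ)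
      = (if b ≠ 0 then 1 else 0) + 2 * (if b = 0 then (if a ≠ 0 then 1 else 0) else 0) := by
    decide
  simp only [hammingNorm, card_filter]
  rw [← sum_subtype (univ.filter (x · = 0)) (by simp) (fun j => if c j ≠ 0 then 1 else 0),
    sum_filter, mul_sum, ← sum_add_distrib, ← sum_add_distrib]
  exact sum_congr rfl fun j _ => hpoint (c j) (x j)

variable {C : Submodule (ZMod 2) (ι → ZMod 2)} {d : ℕ} {x : ι → ZMod 2}

theorem two_mul_le_hammingNorm_of_mem_residualCode (hC : ∀ c ∈ C, c ≠ 0 → d ≤ hammingNorm c)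
    (hx : x ∈ C) {y : {j // x j = 0} → ZMod 2} (hy : y ∈ residualCode C x) (hy0 : y ≠ 0) :
    2 * d ≤ hammingNorm x + 2 * hammingNorm y := by
  obtain ⟨c, hc, rfl⟩ := mem_residualCode.mp hy
  have hc0 : c ≠ 0 := by rintro rfl; exact hy0 rfl
  have hcx : c + x ≠ 0 := by
    intro h
    obtain rfl : c = x := funext fun j => CharTwo.add_eq_zero.mp (congrFun h j)
    exact hy0 (funext fun j => j.2)
  have := hC c hc hc0
  have := hC _ (C.add_mem hc hx) hcx
  have := hammingNorm_add_hammingNorm_add c x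
  omega

theorem finrank_residualCode_add_one (hC : ∀ c ∈ C, c ≠ 0 → d ≤ hammingNorm c)
    (hx : x ∈ C) (hx0 : x ≠ 0) (hw : hammingNorm x < 2 * d) :
    finrank (ZMod 2) (residualCode C x) + 1 = finrank (ZMod 2) C := by
  set f := (LinearMap.funLeft (ZMod 2) (ZMod 2) (Subtype.val : {j // x j = 0} → ι)).domRestrict C
  have hker : LinearMap.ker f = (ZMod 2) ∙ ⟨x, hx⟩ := by
    refine le_antisymm (fun c hc => ?_) ((Submodule.span_singleton_le_iff_mem _ _).mpr ?_)
    · have hres : hammingNorm (fun j : {j // x j = 0} => (c : ι → ZMod 2) j) = 0 :=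
        hammingNorm_eq_zero.mpr hc
      have hsum := hammingNorm_add_hammingNorm_add (c : ι → ZMod 2) x
      have hcases : (c : ι → ZMod 2) = 0 ∨ (c : ι → ZMod 2) + x = 0 := by
        by_contra! h
        have := hC _ c.2 h.1
        have := hC _ (C.add_mem c.2 hx) h.2
        omega
      rcases hcases with h | h
      · simp [Submodule.coe_eq_zero.mp h]
      · obtain rfl : c = ⟨x, hx⟩ :=
          Subtype.ext (funext fun j => CharTwo.add_eq_zero.mp (congrFun h j))
        exact Submodule.mem_span_singleton_self _
    · exact funext fun j => j.2
  have hx0' : (⟨x, hx⟩ : C) ≠ 0 := fun h => hx0 (congrArg Subtype.val h)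
  rw [← f.finrank_range_add_finrank_ker, hker, finrank_span_singleton hx0', residualCode,
    LinearMap.range_domRestrict]

end Residual

section LowerBound

variable {n : ℕ} {C : Submodule (ZMod 2) (Fin n → ZMod 2)}

theorem four_le_finrank_of_minDistGE (hk : 0 < finrank (ZMod 2) C) (h5 : MinDistGE C 5)
    (h3 : MinDistGE (dualCode C) 3) : 4 ≤ finrank (ZMod 2) C := by
  obtain ⟨hne, hsep⟩ := (minDistGE_dualCode_three_iff C).mp h3
  have hcols := card_add_one_le_pow_finrank C hne hsep
  have hplotkin := plotkin_bound C h5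
  simp only [Nat.card_zmod, ZMod.card, Fintype.card_fin] at hcols hplotkin
  have hpos : 2 ≤ 2 ^ finrank (ZMod 2) C := Nat.le_self_pow hk.ne' 2
  by_contra! hk4
  have hm : 2 ^ finrank (ZMod 2) C ≤ 2 ^ 3 := Nat.pow_le_pow_right two_pos (by omega)
  zify [Nat.one_le_two_pow] at hplotkin
  nlinarith

theorem eleven_le_of_four_le_finrank (h5 : MinDistGE C 5) (hk : 4 ≤ finrank (ZMod 2) C) :
    11 ≤ n := by
  by_contra! hn
  obtain ⟨x, hx, hx0, hwx⟩ : ∃ x ∈ C, x ≠ 0 ∧ hammingNorm x = 5 := by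
    by_contra! h
    have h6 : ∀ c ∈ C, c ≠ 0 → 6 ≤ hammingNorm c := fun c hc hc0 =>
      (h5 c hc hc0).lt_of_ne (h c hc hc0).symm
    have hplotkin := plotkin_bound C h6
    simp only [ZMod.card, Fintype.card_fin] at hplotkin
    have hm : 2 ^ 4 ≤ 2 ^ finrank (ZMod 2) C := Nat.pow_le_pow_right two_pos hk
    zify [Nat.one_le_two_pow] at hplotkin hm
    nlinarith
  have hrank := finrank_residualCode_add_one h5 hx hx0 (by omega)
  have hD : ∀ y ∈ residualCode C x, y ≠ 0 → 3 ≤ hammingNorm y := fun y hy hy0 => by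
    have := two_mul_le_hammingNorm_of_mem_residualCode h5 hx hy hy0
    omega
  have hcard := card_zeros_add_hammingNorm x
  have hplotkin := plotkin_bound _ hD
  simp only [ZMod.card, Fintype.card_fin] at hplotkin hcard
  have hm : 2 ^ 3 ≤ 2 ^ finrank (ZMod 2) (residualCode C x) :=
    Nat.pow_le_pow_right two_pos (by omega)
  zify [Nat.one_le_two_pow] at hplotkin hm
  nlinarith

end LowerBound

def generatorMatrix : Matrix (Fin 4) (Fin 11) (ZMod 2) :=
  !![1,0,0,0,0,0,0,1,1,1,1;
     0,1,0,0,0,1,1,0,0,1,1;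
     0,0,1,0,1,0,1,0,1,0,1;
     0,0,0,1,1,1,0,1,0,1,0]

local notation "C₁₁" => Submodule.span (ZMod 2) (Set.range fun i => generatorMatrix i)

set_option maxRecDepth 10000 in
theorem linearIndependent_generatorMatrix :
    LinearIndependent (ZMod 2) fun i => generatorMatrix i := by
  rw [Fintype.linearIndependent_iff]
  decide

set_option maxRecDepth 10000 in
theorem five_le_hammingNorm_sum_smul_generatorMatrix :
    ∀ a : Fin 4 → ZMod 2, ∑ i, a i • generatorMatrix i ≠ 0 →
      5 ≤ hammingNorm (∑ i, a i • generatorMatrix i) := by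
  decide

theorem finrank_span_generatorMatrix : finrank (ZMod 2) C₁₁ = 4 := by
  rw [finrank_span_eq_card linearIndependent_generatorMatrix, Fintype.card_fin]

theorem minDistGE_span_generatorMatrix : MinDistGE C₁₁ 5 := by
  intro c hc hc0
  obtain ⟨a, rfl⟩ := (Submodule.mem_span_range_iff_exists_fun _).mp hc
  exact five_le_hammingNorm_sum_smul_generatorMatrix a hc0

theorem minDistGE_dualCode_span_generatorMatrix : MinDistGE (dualCode C₁₁) 3 := by
  have hcol : ∀ j, ∃ i, generatorMatrix i j ≠ 0 := by decide
  have hsep : ∀ j₁ j₂, j₁ ≠ j₂ → ∃ i, generatorMatrix i j₁ ≠ generatorMatrix i j₂ := by decide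
  refine (minDistGE_dualCode_three_iff _).mpr ⟨fun j => ?_, fun j₁ j₂ hj => ?_⟩
  · obtain ⟨i, hi⟩ := hcol j
    exact ⟨_, Submodule.subset_span ⟨i, rfl⟩, hi⟩
  · obtain ⟨i, hi⟩ := hsep j₁ j₂ hj
    exact ⟨_, Submodule.subset_span ⟨i, rfl⟩, hi⟩

theorem N_five_three :
    N 5 3 = 11 ∧
    (let G : Matrix (Fin 4) (Fin 11) (ZMod 2) :=
      !![1,0,0,0,0,0,0,1,1,1,1;
         0,1,0,0,0,1,1,0,0,1,1;
         0,0,1,0,1,0,1,0,1,0,1;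
         0,0,0,1,1,1,0,1,0,1,0];
     let C : Submodule (ZMod 2) (Fin 11 → ZMod 2) :=
       Submodule.span (ZMod 2) (Set.range fun i => G i);
     0 < Module.finrank (ZMod 2) C ∧ Module.finrank (ZMod 2) C < 11 ∧
       MinDistGE C 5 ∧ MinDistGE (dualCode C) 3) := by
  have hgood : 0 < finrank (ZMod 2) C₁₁ ∧ finrank (ZMod 2) C₁₁ < 11 ∧
      MinDistGE C₁₁ 5 ∧ MinDistGE (dualCode C₁₁) 3 := by
    rw [finrank_span_generatorMatrix]
    exact ⟨by norm_num, by norm_num, minDistGE_span_generatorMatrix,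
      minDistGE_dualCode_span_generatorMatrix⟩
  refine ⟨IsLeast.csInf_eq ⟨⟨_, hgood⟩, ?_⟩, hgood⟩
  rintro n ⟨C, hk, -, h5, h3⟩
  exact eleven_le_of_four_le_finrank h5 (four_le_finrank_of_minDistGE hk h5 h3)
end
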